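/- For every real τ with 0 < τ ≤ 1/4, there exists exactly one complex number z satisfying |z − (i/τ^2 + 1/(4π) − i)| ≤ τ^2/2 and P(z,τ) = 0. -/

import Mathlib

open Real Complex

noncomputable def Ppoly (τ : ℝ) (z : ℂ) : ℂ :=
  z ^ 3 + (Complex.I - 1 / (4 * (π : ℂ)) - Complex.I / (τ : ℂ) ^ 2) * z ^ 2
    - z / 4 - Complex.I / 4

/-!
Writing `c` for the centre of the disc, `P(z,τ) = z²(z - c) - (z + i)/4`, so away from `0` the
roots of `P` are the fixed points of `g z = c + (z + i)/(4z²)`. For `τ ≤ 1/4` the centre has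
modulus about `1/τ²`, and on the disc the perturbation `(z + i)/(4z²)` is of size `O(τ²)` and
`1/8`-Lipschitz, so `g` is a contraction of the disc and Banach's fixed point theorem gives
exactly one root there.
-/

open Metric Function

theorem existsUnique_isFixedPt_of_lipschitzOnWith {α : Type*} [MetricSpace α] {f : α → α}
    {s : Set α} {K : NNReal} (hK : K < 1) (hs : IsComplete s) (hne : s.Nonempty)
    (hmaps : Set.MapsTo f s s) (hf : LipschitzOnWith K f s) : ∃! x, x ∈ s ∧ IsFixedPt f x := by
  have hc : ContractingWith K (hmaps.restrict f s s) := ⟨hK, hf.mapsToRestrict hmaps⟩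
  have : CompleteSpace s := hs.completeSpace_coe
  have : Nonempty s := hne.to_subtype
  let x : s := hc.fixedPoint
  refine ⟨x, ⟨x.2, congrArg Subtype.val hc.fixedPoint_isFixedPt⟩, ?_⟩
  rintro y ⟨hy, hfy⟩
  exact congrArg Subtype.val (hc.fixedPoint_unique (x := ⟨y, hy⟩) (Subtype.ext hfy))

theorem sub_le_norm_of_mem_closedBall {E : Type*} [SeminormedAddCommGroup E] {c z : E} {r : ℝ}
    (hz : z ∈ closedBall c r) : ‖c‖ - r ≤ ‖z‖ := by
  have := norm_sub_norm_le c z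
  rw [mem_closedBall_iff_norm'] at hz
  linarith

noncomputable def correction (z : ℂ) : ℂ := (z + I) / (4 * z ^ 2)

theorem norm_correction_le {z : ℂ} (hz : 2 ≤ ‖z‖) : ‖correction z‖ ≤ 3 / (8 * ‖z‖) := by
  have hnum : ‖z + I‖ ≤ ‖z‖ + 1 := by simpa using norm_add_le z I
  rw [correction, norm_div, norm_mul, norm_pow, RCLike.norm_ofNat,
    div_le_div_iff₀ (by positivity) (by positivity)]
  nlinarith

theorem correction_sub_correction {z w : ℂ} (hz : z ≠ 0) (hw : w ≠ 0) :
    correction z - correction w = (w - z) * (z * w + I * (z + w)) / (4 * z ^ 2 * w ^ 2) := by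
  rw [correction, correction]
  field_simp
  ring

theorem norm_correction_sub_le {z w : ℂ} (hz : 2 ≤ ‖z‖) (hw : 2 ≤ ‖w‖) :
    ‖correction z - correction w‖ ≤ ‖z - w‖ / 8 := by
  have hz0 : z ≠ 0 := norm_pos_iff.1 (by linarith)
  have hw0 : w ≠ 0 := norm_pos_iff.1 (by linarith)
  have hnum : ‖z * w + I * (z + w)‖ ≤ 2 * (‖z‖ * ‖w‖) := by
    calc ‖z * w + I * (z + w)‖ ≤ ‖z * w‖ + ‖I * (z + w)‖ := norm_add_le _ _
      _ = ‖z‖ * ‖w‖ + ‖z + w‖ := by rw [norm_mul, norm_mul, norm_I, one_mul]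
      _ ≤ ‖z‖ * ‖w‖ + (‖z‖ + ‖w‖) := by gcongr; exact norm_add_le z w
      _ ≤ 2 * (‖z‖ * ‖w‖) := by nlinarith
  rw [correction_sub_correction hz0 hw0, norm_div, norm_mul, norm_sub_rev w z,
    norm_mul, norm_mul, norm_pow, norm_pow, RCLike.norm_ofNat,
    div_le_div_iff₀ (by positivity) (by norm_num)]
  have hzw : 2 * (‖z‖ * ‖w‖) * 8 ≤ 4 * (‖z‖ * ‖w‖) ^ 2 := by
    have : 4 ≤ ‖z‖ * ‖w‖ := by nlinarith
    nlinarith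
  calc ‖z - w‖ * ‖z * w + I * (z + w)‖ * 8
      ≤ ‖z - w‖ * (2 * (‖z‖ * ‖w‖) * 8) := by rw [← mul_assoc]; gcongr
    _ ≤ ‖z - w‖ * (4 * (‖z‖ * ‖w‖) ^ 2) := by gcongr
    _ = ‖z - w‖ * (4 * ‖z‖ ^ 2 * ‖w‖ ^ 2) := by ring

theorem existsUnique_root_in_closedBall (c : ℂ) {r : ℝ} (h2 : 2 ≤ ‖c‖ - r)
    (hr : 3 / (8 * (‖c‖ - r)) ≤ r) :
    ∃! z, ‖z - c‖ ≤ r ∧ z ^ 2 * (z - c) = (z + I) / 4 := by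
  have hlarge : ∀ z ∈ closedBall c r, 2 ≤ ‖z‖ :=
    fun z hz => h2.trans (sub_le_norm_of_mem_closedBall hz)
  have hmaps : Set.MapsTo (fun z => c + correction z) (closedBall c r) (closedBall c r) := by
    intro z hz
    rw [mem_closedBall_iff_norm, add_sub_cancel_left]
    calc ‖correction z‖ ≤ 3 / (8 * ‖z‖) := norm_correction_le (hlarge z hz)
      _ ≤ 3 / (8 * (‖c‖ - r)) := by
          gcongr
          exact sub_le_norm_of_mem_closedBall hz
      _ ≤ r := hr
  have hlip : LipschitzOnWith (1 / 8) (fun z => c + correction z) (closedBall c r) := by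
    refine LipschitzOnWith.of_dist_le_mul fun z hz w hw => ?_
    rw [dist_eq_norm, dist_eq_norm, add_sub_add_left_eq_sub]
    simpa [div_eq_inv_mul] using norm_correction_sub_le (hlarge z hz) (hlarge w hw)
  have hroot : ∀ z ∈ closedBall c r,
      (z ^ 2 * (z - c) = (z + I) / 4 ↔ IsFixedPt (fun z => c + correction z) z) := by
    intro z hz
    have hz0 : (4 : ℂ) * z ^ 2 ≠ 0 := by
      have : z ≠ 0 := norm_pos_iff.1 (by linarith [hlarge z hz])
      exact mul_ne_zero (by norm_num) (pow_ne_zero 2 this)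
    rw [IsFixedPt, correction, ← eq_sub_iff_add_eq', div_eq_iff hz0]
    constructor
    · intro h
      linear_combination (-4) * h
    · intro h
      linear_combination (-1 / 4) * h
  obtain ⟨z, ⟨hz, hfix⟩, huniq⟩ := existsUnique_isFixedPt_of_lipschitzOnWith
    (by rw [← NNReal.coe_lt_coe]; norm_num) isClosed_closedBall.isComplete
    (nonempty_closedBall.2 ((by positivity : (0 : ℝ) ≤ 3 / (8 * (‖c‖ - r))).trans hr))
    hmaps hlip
  refine ⟨z, ⟨mem_closedBall_iff_norm.1 hz, (hroot z hz).2 hfix⟩, ?_⟩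
  rintro w ⟨hw, hwroot⟩
  rw [← mem_closedBall_iff_norm] at hw
  exact huniq w ⟨hw, (hroot w hw).1 hwroot⟩

theorem Ppoly_eq (τ : ℝ) (z : ℂ) :
    Ppoly τ z = z ^ 2 * (z - (I / (τ : ℂ) ^ 2 + 1 / (4 * (π : ℂ)) - I)) - (z + I) / 4 := by
  rw [Ppoly]
  ring

theorem le_norm_center (τ : ℝ) : 1 / τ ^ 2 - 1 ≤ ‖I / (τ : ℂ) ^ 2 + 1 / (4 * (π : ℂ)) - I‖ := by
  refine le_trans (le_of_eq ?_) ((le_abs_self _).trans (abs_im_le_norm _))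
  have hreal : 1 / (4 * (π : ℂ)) = ((1 / (4 * π) : ℝ) : ℂ) := by push_cast; ring
  rw [hreal, ← ofReal_pow, sub_im, add_im, div_ofReal_im, ofReal_im, I_im]
  ring

theorem statement7 (τ : ℝ) (hτ0 : 0 < τ) (hτ : τ ≤ 1 / 4) :
    ∃! z : ℂ,
      ‖z - (Complex.I / (τ : ℂ) ^ 2 + 1 / (4 * (π : ℂ)) - Complex.I)‖ ≤ τ ^ 2 / 2 ∧
      Ppoly τ z = 0 := by
  simp only [Ppoly_eq, sub_eq_zero]
  have ht0 : 0 < τ ^ 2 := by positivity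
  have h16 : 16 ≤ 1 / τ ^ 2 := by
    rw [le_div_iff₀ ht0]
    nlinarith
  have hC : 1 / τ ^ 2 - 1 - τ ^ 2 / 2 ≤ ‖I / (τ : ℂ) ^ 2 + 1 / (4 * (π : ℂ)) - I‖ - τ ^ 2 / 2 := by
    linarith [le_norm_center τ]
  refine existsUnique_root_in_closedBall _ (by nlinarith) ?_
  rw [div_le_iff₀ (by nlinarith)]
  have hmul : τ ^ 2 * (1 / τ ^ 2) = 1 := by field_simp
  nlinarith
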